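/- The Fourier transform of f_m(x) = cosh(x)^{-m}, namely ∫_{-∞}^{∞} e^{-ikx} cosh(x)^{-m} dx, equals (π/(m-1)!) · (∏_{l = m-2, m-4, ..., down to 1} (k² + l²)) · (1/cosh(πk/2)) when m is odd, and equals (π/(m-1)!) · (∏_{l = m-2, m-4, ..., down to 1} (k² + l²)) · (k/sinh(πk/2)) when m is even. -/

import Mathlib

open MeasureTheory Complex

/-!
The substitution `t = σ(2x)`, with `σ` the logistic sigmoid, gives
`∫ e^{-ikx} cosh(x)^{-m} dx = 2^{m-1} B(u, ū)` with `u = (m - ik)/2`, that is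
`2^{m-1} Γ(u) Γ(ū) / (m-1)!`. The functional equation `Γ(z + 1) = z Γ(z)` lowers `m` by two at the
cost of the factor `((m-2)² + k²)/4`, down to `m = 1` or `m = 2`, where the reflection formula
`Γ(z) Γ(1 - z) = π / sin(πz)` gives `π / cosh(πk/2)` and `πk / (2 sinh(πk/2))` respectively.
-/

lemma ofReal_mul_smul_cpow_sub_one {a b : ℝ} (ha : 0 < a) (hb : 0 < b) (u v : ℂ) :
    (a * b) • ((a : ℂ) ^ (u - 1) * (b : ℂ) ^ (v - 1)) = (a : ℂ) ^ u * (b : ℂ) ^ v := by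
  have ha' : (a : ℂ) ≠ 0 := by exact_mod_cast ha.ne'
  have hb' : (b : ℂ) ≠ 0 := by exact_mod_cast hb.ne'
  rw [real_smul, cpow_sub _ _ ha', cpow_sub _ _ hb', cpow_one, cpow_one]
  push_cast
  field_simp

lemma betaIntegral_eq_integral_sigmoid (u v : ℂ) :
    betaIntegral u v = ∫ t : ℝ, (Real.sigmoid t : ℂ) ^ u * (Real.sigmoid (-t) : ℂ) ^ v := by
  have hσ' : ∀ t ∈ Set.univ, HasDerivWithinAt Real.sigmoid
      (Real.sigmoid t * Real.sigmoid (-t)) Set.univ t := fun t _ => by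
    rw [Real.sigmoid_neg]
    exact (Real.hasDerivAt_sigmoid t).hasDerivWithinAt
  rw [betaIntegral, intervalIntegral.integral_of_le zero_le_one, integral_Ioc_eq_integral_Ioo,
    ← Real.range_sigmoid, ← Set.image_univ,
    integral_image_eq_integral_abs_deriv_smul MeasurableSet.univ hσ'
      Real.sigmoid_injective.injOn, setIntegral_univ]
  refine integral_congr_ae (Filter.Eventually.of_forall fun t => ?_)
  have h0 := Real.sigmoid_pos t
  have h1 := Real.sigmoid_pos (-t)
  dsimp only
  rw [abs_of_pos (mul_pos h0 h1), ← ofReal_mul_smul_cpow_sub_one h0 h1, Real.sigmoid_neg]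
  push_cast
  ring_nf

lemma Real.sigmoid_two_mul (x : ℝ) : Real.sigmoid (2 * x) = Real.exp x / (2 * Real.cosh x) := by
  rw [Real.sigmoid_def, Real.cosh_eq]
  field_simp
  rw [add_mul, one_mul, ← Real.exp_add]
  ring_nf

lemma ofReal_exp_div_cpow_mul {c : ℝ} (hc : 0 < c) (x : ℝ) (u v : ℂ) :
    ((Real.exp x / c : ℝ) : ℂ) ^ u * ((Real.exp (-x) / c : ℝ) : ℂ) ^ v
      = exp ((u - v) * x) / (c : ℂ) ^ (u + v) := by
  have hlog : ∀ y : ℝ, Real.log (Real.exp y / c) = y - Real.log c := fun y => by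
    rw [Real.log_div (Real.exp_pos y).ne' hc.ne', Real.log_exp]
  simp only [cpow_def_of_ne_zero (ofReal_ne_zero.2 (div_pos (Real.exp_pos _) hc).ne'),
    cpow_def_of_ne_zero (ofReal_ne_zero.2 hc.ne'), ← ofReal_log (div_pos (Real.exp_pos _) hc).le,
    ← ofReal_log hc.le, hlog, ← exp_add, ← exp_sub]
  push_cast
  ring_nf

lemma betaIntegral_eq_integral_exp_div_cosh (u v : ℂ) :
    betaIntegral u v = 2 * ∫ x : ℝ, exp ((u - v) * x) / ((2 * Real.cosh x : ℝ) : ℂ) ^ (u + v) := by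
  have h2x : ∀ x : ℝ, (Real.sigmoid (2 * x) : ℂ) ^ u * (Real.sigmoid (-(2 * x)) : ℂ) ^ v
      = exp ((u - v) * x) / ((2 * Real.cosh x : ℝ) : ℂ) ^ (u + v) := fun x => by
    rw [← mul_neg, Real.sigmoid_two_mul, Real.sigmoid_two_mul, Real.cosh_neg,
      ofReal_exp_div_cpow_mul (by positivity)]
  rw [betaIntegral_eq_integral_sigmoid, ← integral_congr_ae (Filter.Eventually.of_forall h2x),
    Measure.integral_comp_mul_left (fun t : ℝ => (Real.sigmoid t : ℂ) ^ u *
      (Real.sigmoid (-t) : ℂ) ^ v) 2, abs_inv, abs_two, real_smul]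
  push_cast
  ring

noncomputable def gammaConjProd (s k : ℝ) : ℂ := Gamma ((s - I * k) / 2) * Gamma ((s + I * k) / 2)

open Nat in
lemma integral_exp_div_cosh_pow_succ (m : ℕ) (k : ℝ) :
    ∫ x : ℝ, exp (-(I * k * x)) / (Real.cosh x : ℂ) ^ (m + 1)
      = 2 ^ m * gammaConjProd (m + 1 : ℕ) k / m ! := by
  set u : ℂ := (((m + 1 : ℕ) : ℝ) - I * k) / 2
  set v : ℂ := (((m + 1 : ℕ) : ℝ) + I * k) / 2
  have hpos : (0 : ℝ) < (m + 1 : ℕ) / 2 := by positivity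
  have hsum : u + v = ((m + 1 : ℕ) : ℂ) := by
    push_cast [u, v]; ring
  have hdiff : u - v = -(I * k) := by
    ring
  have hB : betaIntegral u v
      = 2 / 2 ^ (m + 1) * ∫ x : ℝ, exp (-(I * k * x)) / (Real.cosh x : ℂ) ^ (m + 1) := by
    simp_rw [betaIntegral_eq_integral_exp_div_cosh, hdiff, hsum, cpow_natCast, neg_mul, ofReal_mul,
      ofReal_ofNat, mul_pow, ← integral_const_mul]
    congr 2 with x
    field_simp
  rw [gammaConjProd, Gamma_mul_Gamma_eq_betaIntegral (by simpa [u] using hpos)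
    (by simpa [v] using hpos), hsum, Nat.cast_succ, Gamma_nat_eq_factorial, hB]
  have hfac : (m ! : ℂ) ≠ 0 := Nat.cast_ne_zero.2 (factorial_ne_zero m)
  field_simp
  ring

lemma gammaConjProd_add_two {s : ℝ} (hs : s ≠ 0) (k : ℝ) :
    gammaConjProd (s + 2) k = ((s ^ 2 + k ^ 2) / 4 : ℝ) * gammaConjProd s k := by
  have hsub : (((s + 2 : ℝ) : ℂ) - I * k) / 2 = ((s : ℂ) - I * k) / 2 + 1 := by push_cast; ring
  have hadd : (((s + 2 : ℝ) : ℂ) + I * k) / 2 = ((s : ℂ) + I * k) / 2 + 1 := by push_cast; ring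
  have hsub0 : ((s : ℂ) - I * k) / 2 ≠ 0 := fun h => by
    simpa [hs] using congrArg re h
  have hadd0 : ((s : ℂ) + I * k) / 2 ≠ 0 := fun h => by
    simpa [hs] using congrArg re h
  rw [gammaConjProd, gammaConjProd, hsub, hadd, Gamma_add_one _ hsub0, Gamma_add_one _ hadd0]
  push_cast
  linear_combination (-(k : ℂ) ^ 2 / 4 * Gamma ((s - I * k) / 2) * Gamma ((s + I * k) / 2)) * I_sq

lemma gammaConjProd_eq_prod_mul {s t : ℝ} (hs : 0 < s) (k : ℝ) (n : ℕ) (ht : t = s + 2 * n) :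
    gammaConjProd t k
      = ((∏ i ∈ Finset.range n, (k ^ 2 + (t - 2 - 2 * i) ^ 2)) / 4 ^ n : ℝ)
        * gammaConjProd s k := by
  subst ht
  induction n with
  | zero => simp
  | succ n ih =>
    rw [Nat.cast_succ, show s + 2 * (n + 1 : ℝ) = s + 2 * n + 2 by ring,
      gammaConjProd_add_two (by positivity), ih, Finset.prod_range_succ', ← mul_assoc, ← ofReal_mul]
    congr 2
    push_cast
    ring_nf

lemma gammaConjProd_one (k : ℝ) :
    gammaConjProd 1 k = ((Real.pi / Real.cosh (Real.pi / 2 * k) : ℝ) : ℂ) := by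
  have hadd : (((1 : ℝ) : ℂ) + I * k) / 2 = 1 - (((1 : ℝ) : ℂ) - I * k) / 2 := by push_cast; ring
  have hsin : (Real.pi : ℂ) * ((((1 : ℝ) : ℂ) - I * k) / 2)
      = Real.pi / 2 - ((Real.pi / 2 * k : ℝ) : ℂ) * I := by
    push_cast; ring
  rw [gammaConjProd, hadd, Gamma_mul_Gamma_one_sub, hsin, sin_pi_div_two_sub, cos_mul_I,
    ← ofReal_cosh, ofReal_div]

lemma gammaConjProd_two {k : ℝ} (hk : k ≠ 0) :
    gammaConjProd 2 k = ((Real.pi * k / (2 * Real.sinh (Real.pi / 2 * k)) : ℝ) : ℂ) := by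
  have hw : I * k / 2 ≠ 0 := by simp [hk]
  have hsinh : Real.sinh (Real.pi / 2 * k) ≠ 0 := by
    rw [Ne, Real.sinh_eq_zero]
    positivity
  have hsub : (((2 : ℝ) : ℂ) - I * k) / 2 = 1 - I * k / 2 := by push_cast; ring
  have hadd : (((2 : ℝ) : ℂ) + I * k) / 2 = I * k / 2 + 1 := by push_cast; ring
  have hsin : (Real.pi : ℂ) * (I * k / 2) = ((Real.pi / 2 * k : ℝ) : ℂ) * I := by
    push_cast; ring
  rw [gammaConjProd, hsub, hadd, Gamma_add_one _ hw, mul_left_comm, mul_comm (Gamma (1 - _)),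
    Gamma_mul_Gamma_one_sub, hsin, sin_mul_I, ← ofReal_sinh]
  push_cast
  field_simp

/-- Fourier transform of `cosh(x)^{-m}`:
`∫ e^{-ikx} cosh(x)^{-m} dx = (π/(m-1)!) (∏_{l=m-2, m-4, …, ≥1} (k²+l²)) · (1/cosh(πk/2))`
for `m` odd, and `… · (k/sinh(πk/2))` for `m` even (away from `k = 0`). -/
theorem stmt_1 (m : ℕ) (hm : 1 ≤ m) (k : ℝ) :
    (Odd m →
      (∫ x : ℝ, Complex.exp (-(Complex.I * k * x)) / ((Real.cosh x : ℂ)) ^ m)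
        = ((Real.pi / (Nat.factorial (m - 1)) *
            (∏ i ∈ Finset.range ((m - 1) / 2), (k ^ 2 + ((m : ℝ) - 2 - 2 * i) ^ 2)) *
            (1 / Real.cosh (Real.pi / 2 * k)) : ℝ) : ℂ)) ∧
    (Even m → k ≠ 0 →
      (∫ x : ℝ, Complex.exp (-(Complex.I * k * x)) / ((Real.cosh x : ℂ)) ^ m)
        = ((Real.pi / (Nat.factorial (m - 1)) *
            (∏ i ∈ Finset.range ((m - 1) / 2), (k ^ 2 + ((m : ℝ) - 2 - 2 * i) ^ 2)) *
            (k / Real.sinh (Real.pi / 2 * k)) : ℝ) : ℂ)) := by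
  obtain ⟨n, rfl⟩ : ∃ n, m = n + 1 := ⟨m - 1, by omega⟩
  rw [integral_exp_div_cosh_pow_succ, Nat.add_sub_cancel]
  refine ⟨fun hodd => ?_, fun heven hk => ?_⟩
  · obtain ⟨j, rfl⟩ : ∃ j, n = 2 * j := ⟨n / 2, by grind⟩
    rw [gammaConjProd_eq_prod_mul one_pos k j (by push_cast; ring), gammaConjProd_one,
      show 2 * j / 2 = j by omega, pow_mul]
    push_cast
    field_simp
    ring
  · obtain ⟨j, rfl⟩ : ∃ j, n = 2 * j + 1 := ⟨n / 2, by grind⟩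
    rw [gammaConjProd_eq_prod_mul two_pos k j (by push_cast; ring), gammaConjProd_two hk,
      show (2 * j + 1) / 2 = j by omega, pow_succ, pow_mul]
    push_cast
    field_simp
    ring
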